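/- arXiv:1409.5245 — 5 statements merged into one kernel-verified Lean document; each statement's English description precedes it below -/
import Mathlib

section
/- If f:[a,b]→ℝ is convex and g:[a,b]→ℝ is nonnegative, integrable, and symmetric about (a+b)/2 (i.e. g(a+b−x)=g(x) for all x in [a,b]), then f((a+b)/2)·∫_a^b g(x)dx ≤ ∫_a^b f(x)g(x)dx ≤ ((f(a)+f(b))/2)·∫_a^b g(x)dx. -/
open intervalIntegral MeasureTheory

theorem fejer_inequality (a b : ℝ) (hab : a < b) (f g : ℝ → ℝ)
    (hf : ConvexOn ℝ (Set.Icc a b) f)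
    (hg0 : ∀ x ∈ Set.Icc a b, 0 ≤ g x)
    (hg : IntervalIntegrable g volume a b)
    (hfg : IntervalIntegrable (fun x => f x * g x) volume a b)
    (hgsym : ∀ x ∈ Set.Icc a b, g (a + b - x) = g x) :
    f ((a + b) / 2) * ∫ x in a..b, g x ≤ (∫ x in a..b, f x * g x) ∧
    (∫ x in a..b, f x * g x) ≤ (f a + f b) / 2 * ∫ x in a..b, g x := by
  have hab' : a ≤ b := hab.le
  have hba : (0:ℝ) < b - a := by linarith
  have hmem : ∀ x ∈ Set.Icc a b, a + b - x ∈ Set.Icc a b := by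
    rintro x ⟨h1, h2⟩; exact ⟨by linarith, by linarith⟩
  -- integrability of reflected fg
  have h1 : IntervalIntegrable (fun x => f (a + b - x) * g (a + b - x)) volume a b := by
    have := (hfg.comp_sub_left (a + b)).symm
    simpa using this
  have heq : Set.EqOn (fun x => f (a + b - x) * g (a + b - x))
      (fun x => f (a + b - x) * g x) (Set.uIcc a b) := by
    intro x hx
    rw [Set.uIcc_of_le hab'] at hx
    simp only [hgsym x hx]
  have h2 : IntervalIntegrable (fun x => f (a + b - x) * g x) volume a b := by
    rw [intervalIntegrable_iff] at h1 ⊢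
    exact h1.congr_fun (fun x hx => heq (Set.uIoc_subset_uIcc hx)) measurableSet_uIoc
  -- the reflected integral equals the original
  have hrefl : (∫ x in a..b, f (a + b - x) * g x) = ∫ x in a..b, f x * g x := by
    rw [← intervalIntegral.integral_congr heq,
      intervalIntegral.integral_comp_sub_left (fun x => f x * g x) (a + b)]
    norm_num
  have hsum : IntervalIntegrable (fun x => (f x + f (a + b - x)) * g x) volume a b := by
    simpa [add_mul] using hfg.add h2
  -- key identity
  have hkey : (∫ x in a..b, f x * g x)
      = (1 / 2) * ∫ x in a..b, (f x + f (a + b - x)) * g x := by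
    have : (∫ x in a..b, (f x + f (a + b - x)) * g x)
        = (∫ x in a..b, f x * g x) + ∫ x in a..b, f (a + b - x) * g x := by
      rw [← intervalIntegral.integral_add hfg h2]
      congr 1; ext x; ring
    rw [this, hrefl]; ring
  constructor
  · -- lower bound
    have hmono : (∫ x in a..b, (2 * f ((a + b) / 2)) * g x)
        ≤ ∫ x in a..b, (f x + f (a + b - x)) * g x := by
      apply intervalIntegral.integral_mono_on hab' (hg.const_mul _) hsum
      intro x hx
      have hc := hf.2 hx (hmem x hx) (by norm_num : (0:ℝ) ≤ 1/2)
        (by norm_num : (0:ℝ) ≤ 1/2) (by norm_num)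
      rw [smul_eq_mul, smul_eq_mul, smul_eq_mul, smul_eq_mul,
        show (1/2:ℝ) * x + 1/2 * (a + b - x) = (a + b) / 2 by ring] at hc
      have := mul_le_mul_of_nonneg_right (by linarith : 2 * f ((a+b)/2) ≤ f x + f (a+b-x))
        (hg0 x hx)
      exact this
    rw [intervalIntegral.integral_const_mul] at hmono
    calc f ((a + b) / 2) * ∫ x in a..b, g x
        = (1/2) * (2 * f ((a + b) / 2) * ∫ x in a..b, g x) := by ring
      _ ≤ (1/2) * ∫ x in a..b, (f x + f (a + b - x)) * g x := by linarith
      _ = ∫ x in a..b, f x * g x := hkey.symm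
  · -- upper bound
    have hmono : (∫ x in a..b, (f x + f (a + b - x)) * g x)
        ≤ ∫ x in a..b, (f a + f b) * g x := by
      apply intervalIntegral.integral_mono_on hab' hsum (hg.const_mul _)
      intro x hx
      obtain ⟨hx1, hx2⟩ := hx
      have hw1 : (0:ℝ) ≤ (b - x) / (b - a) := div_nonneg (by linarith) hba.le
      have hw2 : (0:ℝ) ≤ (x - a) / (b - a) := div_nonneg (by linarith) hba.le
      have hw : (b - x) / (b - a) + (x - a) / (b - a) = 1 := by field_simp; ring
      have hA := hf.2 (Set.left_mem_Icc.2 hab') (Set.right_mem_Icc.2 hab') hw1 hw2 hw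
      have hB := hf.2 (Set.left_mem_Icc.2 hab') (Set.right_mem_Icc.2 hab') hw2 hw1
        (by linarith)
      rw [smul_eq_mul, smul_eq_mul, smul_eq_mul, smul_eq_mul,
        show (b - x) / (b - a) * a + (x - a) / (b - a) * b = x by field_simp; ring] at hA
      rw [smul_eq_mul, smul_eq_mul, smul_eq_mul, smul_eq_mul,
        show (x - a) / (b - a) * a + (b - x) / (b - a) * b = a + b - x by
          field_simp; ring] at hB
      have hsumle : f x + f (a + b - x) ≤ f a + f b := by
        have h3 : ((b - x) / (b - a) + (x - a) / (b - a)) * f a = f a := by rw [hw]; ring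
        have h4 : ((x - a) / (b - a) + (b - x) / (b - a)) * f b = f b := by
          rw [show (x - a) / (b - a) + (b - x) / (b - a) = 1 by linarith]; ring
        nlinarith [hA, hB]
      exact mul_le_mul_of_nonneg_right hsumle (hg0 x ⟨hx1, hx2⟩)
    rw [intervalIntegral.integral_const_mul] at hmono
    calc (∫ x in a..b, f x * g x)
        = (1/2) * ∫ x in a..b, (f x + f (a + b - x)) * g x := hkey
      _ ≤ (1/2) * ((f a + f b) * ∫ x in a..b, g x) := by linarith
      _ = (f a + f b) / 2 * ∫ x in a..b, g x := by ring
end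

section
/- If f:[0,∞)→[0,∞) is s-convex in the second sense for some s∈(0,1), and a,b∈[0,∞) with a<b and f integrable on [a,b], then 2^{s−1} f((a+b)/2) ≤ (1/(b−a)) ∫_a^b f(x)dx ≤ (f(a)+f(b))/(s+1). -/
open intervalIntegral MeasureTheory

/-- `f` is s-convex in the second sense on `[0,∞)`. -/
def SConvexSecond (s : ℝ) (f : ℝ → ℝ) : Prop :=
  ∀ x ∈ Set.Ici (0:ℝ), ∀ y ∈ Set.Ici (0:ℝ), ∀ l ∈ Set.Icc (0:ℝ) 1,
    f (l * x + (1 - l) * y) ≤ l ^ s * f x + (1 - l) ^ s * f y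

theorem sconvex_hadamard (s : ℝ) (hs : s ∈ Set.Ioo (0:ℝ) 1) (f : ℝ → ℝ)
    (hf0 : ∀ x ∈ Set.Ici (0:ℝ), 0 ≤ f x)
    (hf : SConvexSecond s f)
    (a b : ℝ) (ha : 0 ≤ a) (hab : a < b)
    (hint : IntervalIntegrable f volume a b) :
    (2:ℝ) ^ (s - 1) * f ((a + b) / 2) ≤ (1 / (b - a)) * ∫ x in a..b, f x ∧
    (1 / (b - a)) * (∫ x in a..b, f x) ≤ (f a + f b) / (s + 1) := by
  obtain ⟨hs0, hs1⟩ := hs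
  have hba : (0:ℝ) < b - a := by linarith
  have hbane : b - a ≠ 0 := ne_of_gt hba
  -- integrability of the affine composition on [0,1]
  have hg : IntervalIntegrable (fun t => f ((b - a) * t + a)) volume 0 1 := by
    have h1 : IntervalIntegrable (fun x => f (x + a)) volume 0 (b - a) := by
      simpa using hint.comp_add_right a
    have h2 := h1.comp_mul_left (c := b - a)
    simpa [hbane] using h2
  -- change of variables
  have hcv : ∫ x in a..b, f x = (b - a) * ∫ t in (0:ℝ)..1, f ((b - a) * t + a) := by
    have := intervalIntegral.smul_integral_comp_mul_add (a := (0:ℝ)) (b := 1) f (b - a) a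
    simp only [smul_eq_mul, mul_zero, zero_add, mul_one, sub_add_cancel] at this
    exact this.symm
  -- integrability of t ^ s and (1-t)^s on [0,1]
  have hrpow : IntervalIntegrable (fun t : ℝ => t ^ s) volume 0 1 :=
    intervalIntegral.intervalIntegrable_rpow (Or.inl hs0.le)
  have hrpow' : IntervalIntegrable (fun t : ℝ => (1 - t) ^ s) volume 0 1 := by
    have := (intervalIntegral.intervalIntegrable_rpow (a := 0) (b := 1)
      (r := s) (Or.inl hs0.le)).comp_sub_left 1
    simpa using this.symm
  have hint1 : ∫ t in (0:ℝ)..1, t ^ s = 1 / (s + 1) := by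
    rw [integral_rpow (Or.inl (by linarith))]
    rw [Real.one_rpow, Real.zero_rpow (by linarith)]
    norm_num
  have hint2 : ∫ t in (0:ℝ)..1, (1 - t) ^ s = 1 / (s + 1) := by
    have := intervalIntegral.integral_comp_sub_left (a := (0:ℝ)) (b := 1)
      (fun t : ℝ => t ^ s) 1
    simpa [this] using hint1
  constructor
  · -- left inequality
    have key : ∀ x ∈ Set.Icc a b,
        f ((a + b) / 2) ≤ (1/2:ℝ) ^ s * f x + (1/2:ℝ) ^ s * f (a + b - x) := by
      intro x hx
      have hx0 : (0:ℝ) ≤ x := le_trans ha hx.1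
      have hy0 : (0:ℝ) ≤ a + b - x := by have := hx.2; linarith
      have := hf x hx0 (a + b - x) hy0 (1/2) (by norm_num)
      have heq : (1/2:ℝ) * x + (1 - 1/2) * (a + b - x) = (a + b) / 2 := by ring
      rw [heq] at this
      convert this using 2 <;> norm_num
    have hint2' : IntervalIntegrable (fun x => f (a + b - x)) volume a b := by
      have := hint.comp_sub_left (a + b)
      simpa using this.symm
    have hmono := intervalIntegral.integral_mono_on hab.le
      (intervalIntegrable_const (c := f ((a + b) / 2)))
      (((hint.const_mul _).add (hint2'.const_mul _))) key
    rw [intervalIntegral.integral_const, intervalIntegral.integral_add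
      (hint.const_mul _) (hint2'.const_mul _),
      intervalIntegral.integral_const_mul, intervalIntegral.integral_const_mul] at hmono
    have hflip : ∫ x in a..b, f (a + b - x) = ∫ x in a..b, f x := by
      have := intervalIntegral.integral_comp_sub_left (a := a) (b := b) f (a + b)
      simpa using this
    rw [hflip] at hmono
    -- hmono : (b - a) • f ((a+b)/2) ≤ (1/2)^s * ∫ + (1/2)^s * ∫
    have hpow : (2:ℝ) ^ (s - 1) * ((1/2:ℝ) ^ s * 2) = 1 := by
      have h2 : ((1/2:ℝ)) ^ s = (2:ℝ) ^ (-s) := by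
        rw [Real.rpow_neg (by norm_num), ← Real.inv_rpow (by norm_num)]
        norm_num
      have h3 : (2:ℝ) ^ (s - 1) * (2:ℝ) ^ (-s) = 2⁻¹ := by
        rw [← Real.rpow_add (by norm_num), show s - 1 + -s = -1 by ring, Real.rpow_neg_one]
      rw [h2, ← mul_assoc, h3]
      norm_num
    have hI : (b - a) * f ((a + b) / 2) ≤ ((1/2:ℝ) ^ s * 2) * ∫ x in a..b, f x := by
      rw [smul_eq_mul] at hmono; linarith
    have hc : (0:ℝ) < (2:ℝ) ^ (s - 1) := Real.rpow_pos_of_pos (by norm_num) _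
    rw [div_mul_eq_mul_div, le_div_iff₀ hba, one_mul] at *
    calc (2:ℝ) ^ (s - 1) * f ((a + b) / 2) * (b - a)
        ≤ (2:ℝ) ^ (s - 1) * (((1/2:ℝ) ^ s * 2) * ∫ x in a..b, f x) := by
          rw [mul_assoc, mul_comm (f _) (b - a)]
          exact mul_le_mul_of_nonneg_left hI hc.le
      _ = ∫ x in a..b, f x := by rw [← mul_assoc, hpow, one_mul]
  · -- right inequality
    have key : ∀ t ∈ Set.Icc (0:ℝ) 1,
        f ((b - a) * t + a) ≤ t ^ s * f b + (1 - t) ^ s * f a := by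
      intro t ht
      have := hf b (by linarith : (0:ℝ) ≤ b) a ha t ht
      have heq : t * b + (1 - t) * a = (b - a) * t + a := by ring
      rwa [heq] at this
    have hmono := intervalIntegral.integral_mono_on (by norm_num : (0:ℝ) ≤ 1) hg
      ((hrpow.mul_const _).add (hrpow'.mul_const _)) key
    rw [intervalIntegral.integral_add (hrpow.mul_const _) (hrpow'.mul_const _),
      intervalIntegral.integral_mul_const, intervalIntegral.integral_mul_const,
      hint1, hint2] at hmono
    rw [hcv, div_mul_eq_mul_div, div_le_iff₀ hba, one_mul]
    calc (b - a) * ∫ t in (0:ℝ)..1, f ((b - a) * t + a)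
        ≤ (b - a) * (1 / (s + 1) * f b + 1 / (s + 1) * f a) :=
          mul_le_mul_of_nonneg_left hmono hba.le
      _ = (f a + f b) / (s + 1) * (b - a) := by ring
end

section
/- If f:[a,b]→ℝ is positive, integrable and convex on [a,b] with 0≤a<b, then for every α>0: f((a+b)/2) ≤ (Γ(α+1)/(2(b−a)^α))·[J_{a+}^α f(b) + J_{b−}^α f(a)] ≤ (f(a)+f(b))/2. -/
open intervalIntegral MeasureTheory

/-- Left Riemann–Liouville fractional integral `J_{a+}^α f (x)`. -/
noncomputable def Jplus (α a : ℝ) (f : ℝ → ℝ) (x : ℝ) : ℝ :=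
  (1 / Real.Gamma α) * ∫ t in a..x, (x - t) ^ (α - 1) * f t

/-- Right Riemann–Liouville fractional integral `J_{b-}^α f (x)`. -/
noncomputable def Jminus (α b : ℝ) (f : ℝ → ℝ) (x : ℝ) : ℝ :=
  (1 / Real.Gamma α) * ∫ t in x..b, (t - x) ^ (α - 1) * f t

theorem fractional_hermite_hadamard (a b : ℝ) (ha : 0 ≤ a) (hab : a < b)
    (f : ℝ → ℝ) (hfpos : ∀ x ∈ Set.Icc a b, 0 < f x)
    (hfint : IntervalIntegrable f volume a b)
    (hf : ConvexOn ℝ (Set.Icc a b) f) (α : ℝ) (hα : 0 < α) :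
    f ((a + b) / 2) ≤
      Real.Gamma (α + 1) / (2 * (b - a) ^ α) * (Jplus α a f b + Jminus α b f a) ∧
    Real.Gamma (α + 1) / (2 * (b - a) ^ α) * (Jplus α a f b + Jminus α b f a) ≤
      (f a + f b) / 2 := by
  have hba : (0:ℝ) < b - a := sub_pos.2 hab
  have hα1 : (-1:ℝ) < α - 1 := by linarith
  set m : ℝ := (a + b) / 2 with hm
  -- kernel integrability
  have Kb : IntervalIntegrable (fun t => (b - t) ^ (α - 1)) volume a b := by
    have h := (intervalIntegral.intervalIntegrable_rpow' (a := 0) (b := b - a) hα1).comp_sub_left b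
    simpa using h.symm
  have Ka : IntervalIntegrable (fun t => (t - a) ^ (α - 1)) volume a b := by
    have h := (intervalIntegral.intervalIntegrable_rpow' (a := 0) (b := b - a) hα1).comp_sub_right a
    simpa using h
  -- integral values of kernels
  have Ib : (∫ t in a..b, (b - t) ^ (α - 1)) = (b - a) ^ α / α := by
    rw [intervalIntegral.integral_comp_sub_left (fun x => x ^ (α - 1)) b, sub_self,
      integral_rpow (Or.inl hα1)]
    rw [show α - 1 + 1 = α by ring, Real.zero_rpow hα.ne']
    ring
  have Ia : (∫ t in a..b, (t - a) ^ (α - 1)) = (b - a) ^ α / α := by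
    rw [intervalIntegral.integral_comp_sub_right (fun x => x ^ (α - 1)) a, sub_self,
      integral_rpow (Or.inl hα1)]
    rw [show α - 1 + 1 = α by ring, Real.zero_rpow hα.ne']
    ring
  -- boundedness of f on [a, b]
  have hCf : ∀ t ∈ Set.Icc a b, ‖f t‖ ≤ max (f a) (f b) := by
    intro t ht
    rw [Real.norm_eq_abs, abs_of_pos (hfpos t ht)]
    exact hf.le_on_segment (Set.left_mem_Icc.2 hab.le) (Set.right_mem_Icc.2 hab.le)
      ((segment_eq_Icc hab.le) ▸ ht)
  -- products with f are interval integrable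
  have prodInt : ∀ g : ℝ → ℝ, IntervalIntegrable g volume a b →
      IntervalIntegrable (fun t => g t * f t) volume a b := by
    intro g hg
    rw [intervalIntegrable_iff_integrableOn_Ioc_of_le hab.le] at hg ⊢
    have hbd : ∀ᵐ x ∂(volume.restrict (Set.Ioc a b)), ‖f x‖ ≤ max (f a) (f b) :=
      (ae_restrict_iff' measurableSet_Ioc).2
        (ae_of_all _ fun x hx => hCf x (Set.Ioc_subset_Icc_self hx))
    have := hg.bdd_mul (hfint.1.aestronglyMeasurable) hbd
    exact this.congr (ae_of_all _ fun x => mul_comm _ _)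
  set F : ℝ → ℝ := fun t => ((b - t) ^ (α - 1) + (t - a) ^ (α - 1)) * f t with hF
  have hFint : IntervalIntegrable F volume a b := prodInt _ (Kb.add Ka)
  -- symmetry
  have hwσ : ∀ t : ℝ, (b - (a + b - t)) ^ (α - 1) + ((a + b - t) - a) ^ (α - 1)
      = (b - t) ^ (α - 1) + (t - a) ^ (α - 1) := by
    intro t
    rw [show b - (a + b - t) = t - a by ring, show (a + b - t) - a = b - t by ring]
    ring
  have hsym : (∫ t in a..b, F (a + b - t)) = ∫ t in a..b, F t := by
    rw [intervalIntegral.integral_comp_sub_left F (a + b)]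
    norm_num
  have hFσint : IntervalIntegrable (fun t => F (a + b - t)) volume a b := by
    have h := hFint.comp_sub_left (a + b)
    have h2 := h.symm
    simpa using h2
  -- pointwise convexity inequalities
  have key1 : ∀ t ∈ Set.Icc a b, 2 * f m ≤ f t + f (a + b - t) := by
    intro t ht
    have htσ : a + b - t ∈ Set.Icc a b := ⟨by linarith [ht.2], by linarith [ht.1]⟩
    have h := hf.2 ht htσ (by norm_num : (0:ℝ) ≤ 1/2) (by norm_num : (0:ℝ) ≤ 1/2)
      (by norm_num)
    simp only [smul_eq_mul] at h
    rw [show (1/2 : ℝ) * t + (1/2) * (a + b - t) = m by rw [hm]; ring] at h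
    linarith
  have key2 : ∀ t ∈ Set.Icc a b, f t + f (a + b - t) ≤ f a + f b := by
    intro t ht
    set l : ℝ := (b - t) / (b - a) with hl
    set u : ℝ := (t - a) / (b - a) with hu
    have hl0 : 0 ≤ l := div_nonneg (by linarith [ht.2]) hba.le
    have hu0 : 0 ≤ u := div_nonneg (by linarith [ht.1]) hba.le
    have hlu : l + u = 1 := by rw [hl, hu]; field_simp; ring
    have h1 := hf.2 (Set.left_mem_Icc.2 hab.le) (Set.right_mem_Icc.2 hab.le) hl0 hu0 hlu
    have h2 := hf.2 (Set.left_mem_Icc.2 hab.le) (Set.right_mem_Icc.2 hab.le) hu0 hl0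
      (by linarith)
    simp only [smul_eq_mul] at h1 h2
    rw [show l * a + u * b = t by rw [hl, hu]; field_simp; ring] at h1
    rw [show u * a + l * b = a + b - t by rw [hl, hu]; field_simp; ring] at h2
    have hkey : l * f a + u * f b + (u * f a + l * f b) = f a + f b := by
      linear_combination (f a + f b) * hlu
    linarith
  have hw0 : ∀ t ∈ Set.Icc a b, 0 ≤ (b - t) ^ (α - 1) + (t - a) ^ (α - 1) := fun t ht =>
    add_nonneg (Real.rpow_nonneg (by linarith [ht.2]) _) (Real.rpow_nonneg (by linarith [ht.1]) _)
  set W : ℝ := 2 * (b - a) ^ α / α with hWdef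
  have hWpos : 0 < W := by
    apply div_pos (by positivity) hα
  have hWint : (∫ t in a..b, ((b - t) ^ (α - 1) + (t - a) ^ (α - 1))) = W := by
    rw [intervalIntegral.integral_add Kb Ka, Ib, Ia, hWdef]
    ring
  -- sum identity : ∫ F + ∫ F∘σ = 2 ∫ F
  have hFadd : (∫ t in a..b, (F t + F (a + b - t))) = 2 * ∫ t in a..b, F t := by
    rw [intervalIntegral.integral_add hFint hFσint, hsym]
    ring
  -- lower bound
  have hlow : f m * W ≤ ∫ t in a..b, F t := by
    have hmono : (∫ t in a..b, ((b - t) ^ (α - 1) + (t - a) ^ (α - 1)) * (2 * f m))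
        ≤ ∫ t in a..b, (F t + F (a + b - t)) := by
      apply intervalIntegral.integral_mono_on hab.le ((Kb.add Ka).mul_const _)
        (hFint.add hFσint)
      intro t ht
      have hFeq : F t + F (a + b - t)
          = ((b - t) ^ (α - 1) + (t - a) ^ (α - 1)) * (f t + f (a + b - t)) := by
        rw [hF]; simp only []; rw [hwσ t]; ring
      rw [hFeq]
      exact mul_le_mul_of_nonneg_left (key1 t ht) (hw0 t ht)
    rw [intervalIntegral.integral_mul_const, hWint, hFadd] at hmono
    linarith
  -- upper bound
  have hupp : (∫ t in a..b, F t) ≤ (f a + f b) / 2 * W := by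
    have hmono : (∫ t in a..b, (F t + F (a + b - t)))
        ≤ ∫ t in a..b, ((b - t) ^ (α - 1) + (t - a) ^ (α - 1)) * (f a + f b) := by
      apply intervalIntegral.integral_mono_on hab.le (hFint.add hFσint)
        ((Kb.add Ka).mul_const _)
      intro t ht
      have hFeq : F t + F (a + b - t)
          = ((b - t) ^ (α - 1) + (t - a) ^ (α - 1)) * (f t + f (a + b - t)) := by
        rw [hF]; simp only []; rw [hwσ t]; ring
      rw [hFeq]
      exact mul_le_mul_of_nonneg_left (key2 t ht) (hw0 t ht)
    rw [intervalIntegral.integral_mul_const, hWint, hFadd] at hmono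
    linarith
  -- rewrite middle term
  have hΓpos : 0 < Real.Gamma α := Real.Gamma_pos_of_pos hα
  have hMid : Real.Gamma (α + 1) / (2 * (b - a) ^ α) * (Jplus α a f b + Jminus α b f a)
      = (∫ t in a..b, F t) / W := by
    have hJ : Jplus α a f b + Jminus α b f a = (1 / Real.Gamma α) * ∫ t in a..b, F t := by
      rw [Jplus, Jminus, ← mul_add,
        ← intervalIntegral.integral_add (prodInt _ Kb) (prodInt _ Ka)]
      congr 1
      apply intervalIntegral.integral_congr
      intro t _
      rw [hF]; ring
    rw [hJ, Real.Gamma_add_one hα.ne', hWdef]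
    have hbp : (0:ℝ) < (b - a) ^ α := Real.rpow_pos_of_pos hba α
    field_simp
  rw [hMid]
  constructor
  · rw [le_div_iff₀ hWpos]
    exact hlow
  · rw [div_le_iff₀ hWpos]
    calc (∫ t in a..b, F t) ≤ (f a + f b) / 2 * W := hupp
    _ = _ := by ring
end

section
/- If |f′|^q is s-convex in the second sense on [a,b] for s∈(0,1], q≥1, then ∫_a^{(a+b)/2} |f′(t)|^q dt ≤ ((b−a)/(2^{s+1}(s+1)))·[(2^{s+1}−1)|f′(a)|^q + |f′(b)|^q]. -/
open intervalIntegral MeasureTheory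

/-- `h` is s-convex in the second sense on the set `D`. -/
def SConvexOn (s : ℝ) (D : Set ℝ) (h : ℝ → ℝ) : Prop :=
  ∀ x ∈ D, ∀ y ∈ D, ∀ l ∈ Set.Icc (0:ℝ) 1,
    h (l * x + (1 - l) * y) ≤ l ^ s * h x + (1 - l) ^ s * h y

theorem sconvex_left_half_integral_bound (a b : ℝ) (hab : a < b)
    (s : ℝ) (hs : s ∈ Set.Ioc (0:ℝ) 1) (q : ℝ) (hq : 1 ≤ q) (f f' : ℝ → ℝ)
    (hf : ∀ t ∈ Set.Ioo a b, HasDerivAt f (f' t) t)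
    (hint : IntervalIntegrable (fun t => |f' t| ^ q) volume a b)
    (habs : SConvexOn s (Set.Icc a b) (fun t => |f' t| ^ q)) :
    (∫ t in a..(a + b) / 2, |f' t| ^ q) ≤
      (b - a) / ((2:ℝ) ^ (s + 1) * (s + 1)) *
        (((2:ℝ) ^ (s + 1) - 1) * |f' a| ^ q + |f' b| ^ q) := by
  obtain ⟨hs0, hs1⟩ := hs
  have hc : (0:ℝ) < b - a := by linarith
  set m : ℝ := (a + b) / 2 with hm
  have ham : a ≤ m := by simp only [hm]; linarith
  have hmb : m ≤ b := by simp only [hm]; linarith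
  -- continuity of the comparison function
  have hcont : Continuous fun t : ℝ =>
      ((b - t) / (b - a)) ^ s * |f' a| ^ q + ((t - a) / (b - a)) ^ s * |f' b| ^ q := by
    have h1 : Continuous fun x : ℝ => x ^ s := Real.continuous_rpow_const hs0.le
    fun_prop
  -- pointwise bound
  have key : ∀ t ∈ Set.Icc a m, |f' t| ^ q ≤
      ((b - t) / (b - a)) ^ s * |f' a| ^ q + ((t - a) / (b - a)) ^ s * |f' b| ^ q := by
    intro t ht
    obtain ⟨hta, htm⟩ := ht
    have htb : t ≤ b := le_trans htm hmb
    have hl : (b - t) / (b - a) ∈ Set.Icc (0:ℝ) 1 := by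
      constructor
      · exact div_nonneg (by linarith) hc.le
      · rw [div_le_one hc]; linarith
    have := habs a ⟨le_refl a, hab.le⟩ b ⟨hab.le, le_refl b⟩ ((b - t) / (b - a)) hl
    have heq : (b - t) / (b - a) * a + (1 - (b - t) / (b - a)) * b = t := by
      field_simp; ring
    have h2 : 1 - (b - t) / (b - a) = (t - a) / (b - a) := by
      field_simp; ring
    rw [heq, h2] at this
    exact this
  -- integral comparison
  have hint1 : IntervalIntegrable (fun t => |f' t| ^ q) volume a m := by
    apply hint.mono_set
    rw [Set.uIcc_of_le ham, Set.uIcc_of_le hab.le]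
    exact Set.Icc_subset_Icc le_rfl hmb
  have hmono : (∫ t in a..m, |f' t| ^ q) ≤
      ∫ t in a..m, (((b - t) / (b - a)) ^ s * |f' a| ^ q + ((t - a) / (b - a)) ^ s * |f' b| ^ q) := by
    apply intervalIntegral.integral_mono_on ham hint1 (hcont.intervalIntegrable a m)
    exact key
  refine hmono.trans_eq ?_
  -- compute the right-hand integral
  have hI1 : (∫ t in a..m, ((b - t) / (b - a)) ^ s)
      = (b - a) * ((1:ℝ) ^ (s + 1) - ((1:ℝ)/2) ^ (s + 1)) / (s + 1) := by
    have := intervalIntegral.integral_comp_sub_left (fun x : ℝ => (x / (b - a)) ^ s) b (a := a) (b := m)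
    rw [this]
    rw [intervalIntegral.integral_comp_div (fun x : ℝ => x ^ s) hc.ne']
    rw [integral_rpow (Or.inl (by linarith))]
    have h1 : (b - a) / (b - a) = (1:ℝ) := div_self hc.ne'
    have h2 : (b - m) / (b - a) = (1:ℝ)/2 := by
      simp only [hm]; field_simp; ring
    rw [h1, h2]
    simp [smul_eq_mul, mul_div_assoc]
  have hI2 : (∫ t in a..m, ((t - a) / (b - a)) ^ s)
      = (b - a) * (((1:ℝ)/2) ^ (s + 1) - (0:ℝ) ^ (s + 1)) / (s + 1) := by
    have := intervalIntegral.integral_comp_sub_right (fun x : ℝ => (x / (b - a)) ^ s) a (a := a) (b := m)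
    rw [this]
    rw [intervalIntegral.integral_comp_div (fun x : ℝ => x ^ s) hc.ne']
    rw [integral_rpow (Or.inl (by linarith))]
    have h1 : (a - a) / (b - a) = (0:ℝ) := by simp
    have h2 : (m - a) / (b - a) = (1:ℝ)/2 := by
      simp only [hm]; field_simp; ring
    rw [h1, h2]
    simp [smul_eq_mul, mul_div_assoc]
  have hg1 : Continuous fun t : ℝ => ((b - t) / (b - a)) ^ s * |f' a| ^ q := by
    have h1 : Continuous fun x : ℝ => x ^ s := Real.continuous_rpow_const hs0.le
    fun_prop
  have hg2 : Continuous fun t : ℝ => ((t - a) / (b - a)) ^ s * |f' b| ^ q := by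
    have h1 : Continuous fun x : ℝ => x ^ s := Real.continuous_rpow_const hs0.le
    fun_prop
  rw [intervalIntegral.integral_add (hg1.intervalIntegrable a m) (hg2.intervalIntegrable a m),
    intervalIntegral.integral_mul_const, intervalIntegral.integral_mul_const, hI1, hI2]
  have hT : ((1:ℝ)/2) ^ (s + 1) = ((2:ℝ) ^ (s + 1))⁻¹ := by
    rw [one_div, Real.inv_rpow (by norm_num)]
  have hzero : (0:ℝ) ^ (s + 1) = 0 := Real.zero_rpow (by positivity)
  have hone : (1:ℝ) ^ (s + 1) = 1 := Real.one_rpow _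
  have hTpos : (0:ℝ) < (2:ℝ) ^ (s + 1) := Real.rpow_pos_of_pos (by norm_num) _
  rw [hT, hzero, hone]
  have hs1' : (0:ℝ) < s + 1 := by linarith
  field_simp
  ring
end

section
/- If |f′|^q is s-convex in the second sense on [a,b] for s∈(0,1], q≥1, then ∫_{(a+b)/2}^b |f′(t)|^q dt ≤ ((b−a)/(2^{s+1}(s+1)))·[|f′(a)|^q + (2^{s+1}−1)|f′(b)|^q]. -/
open intervalIntegral MeasureTheory

theorem sconvex_right_half_integral_bound (a b : ℝ) (hab : a < b)
    (s : ℝ) (hs : s ∈ Set.Ioc (0:ℝ) 1) (q : ℝ) (hq : 1 ≤ q) (f f' : ℝ → ℝ)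
    (hf : ∀ t ∈ Set.Ioo a b, HasDerivAt f (f' t) t)
    (hint : IntervalIntegrable (fun t => |f' t| ^ q) volume a b)
    (habs : SConvexOn s (Set.Icc a b) (fun t => |f' t| ^ q)) :
    (∫ t in ((a + b) / 2)..b, |f' t| ^ q) ≤
      (b - a) / ((2:ℝ) ^ (s + 1) * (s + 1)) *
        (|f' a| ^ q + ((2:ℝ) ^ (s + 1) - 1) * |f' b| ^ q) := by
  obtain ⟨hs0, hs1⟩ := hs
  have hba : (0:ℝ) < b - a := by linarith
  set c : ℝ := (a + b) / 2 with hc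
  have hac : a ≤ c := by rw [hc]; linarith
  have hcb : c ≤ b := by rw [hc]; linarith
  set A := |f' a| ^ q with hA
  set B := |f' b| ^ q with hB
  have hcont : Continuous fun t : ℝ =>
      ((b - t) / (b - a)) ^ s * A + ((t - a) / (b - a)) ^ s * B := by
    apply Continuous.add
    · exact ((Real.continuous_rpow_const hs0.le).comp
        ((continuous_const.sub continuous_id).div_const _)).mul continuous_const
    · exact ((Real.continuous_rpow_const hs0.le).comp
        ((continuous_id.sub continuous_const).div_const _)).mul continuous_const
  have hint' : IntervalIntegrable (fun t => |f' t| ^ q) volume c b :=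
    hint.mono_set (Set.uIcc_subset_uIcc
      (by rw [Set.uIcc_of_le hab.le]; exact ⟨hac.trans' le_rfl |>.trans' (le_refl a), hcb⟩)
      (by rw [Set.uIcc_of_le hab.le]; exact ⟨hab.le, le_rfl⟩))
  have hmono : (∫ t in c..b, |f' t| ^ q) ≤
      ∫ t in c..b, (((b - t) / (b - a)) ^ s * A + ((t - a) / (b - a)) ^ s * B) := by
    apply intervalIntegral.integral_mono_on hcb hint' (hcont.intervalIntegrable _ _)
    intro t ht
    set l : ℝ := (b - t) / (b - a) with hl
    have hl0 : 0 ≤ l := div_nonneg (by linarith [ht.2]) hba.le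
    have hl1 : l ≤ 1 := by rw [div_le_one hba]; linarith [ht.1, hac]
    have h1l : 1 - l = (t - a) / (b - a) := by
      rw [hl, eq_div_iff hba.ne', sub_mul, div_mul_cancel₀ _ hba.ne']; ring
    have key := habs a ⟨le_rfl, hab.le⟩ b ⟨hab.le, le_rfl⟩ l ⟨hl0, hl1⟩
    have ht' : l * a + (1 - l) * b = t := by
      have h : l * (b - a) = b - t := by rw [hl, div_mul_cancel₀ _ hba.ne']
      linear_combination -h
    rw [ht'] at key
    rw [h1l] at key; exact key
  have half : ((b:ℝ) - c) / (b - a) = 1 / 2 := by rw [hc]; field_simp; ring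
  have half2 : ((c:ℝ) - a) / (b - a) = 1 / 2 := by rw [hc]; field_simp; ring
  have hs1' : s + 1 ≠ 0 := by positivity
  have hI1 : (∫ t in c..b, ((b - t) / (b - a)) ^ s) =
      (b - a) * ((1 / 2 : ℝ) ^ (s + 1) / (s + 1)) := by
    have := intervalIntegral.integral_comp_sub_left (fun u => (u / (b - a)) ^ s) b
      (a := c) (b := b)
    simp only [sub_self] at this
    rw [show (fun t : ℝ => ((b - t) / (b - a)) ^ s)
        = fun t : ℝ => (fun u => (u / (b - a)) ^ s) (b - t) from rfl, this,
      intervalIntegral.integral_comp_div (fun v => v ^ s) hba.ne',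
      integral_rpow (Or.inl (by linarith))]
    rw [half, zero_div, Real.zero_rpow hs1', smul_eq_mul]
    ring
  have hI2 : (∫ t in c..b, ((t - a) / (b - a)) ^ s) =
      (b - a) * ((1 - (1 / 2 : ℝ) ^ (s + 1)) / (s + 1)) := by
    have := intervalIntegral.integral_comp_sub_right (fun u => (u / (b - a)) ^ s) a
      (a := c) (b := b)
    rw [show (fun t : ℝ => ((t - a) / (b - a)) ^ s)
        = fun t : ℝ => (fun u => (u / (b - a)) ^ s) (t - a) from rfl, this,
      intervalIntegral.integral_comp_div (fun v => v ^ s) hba.ne',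
      integral_rpow (Or.inl (by linarith))]
    rw [half2, div_self hba.ne', Real.one_rpow, smul_eq_mul]
    
  have hsplit : (∫ t in c..b, (((b - t) / (b - a)) ^ s * A + ((t - a) / (b - a)) ^ s * B))
      = (∫ t in c..b, ((b - t) / (b - a)) ^ s) * A
        + (∫ t in c..b, ((t - a) / (b - a)) ^ s) * B := by
    rw [intervalIntegral.integral_add, intervalIntegral.integral_mul_const,
      intervalIntegral.integral_mul_const]
    · exact (((Real.continuous_rpow_const hs0.le).comp
        ((continuous_const.sub continuous_id).div_const _)).mul
        continuous_const).intervalIntegrable _ _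
    · exact (((Real.continuous_rpow_const hs0.le).comp
        ((continuous_id.sub continuous_const).div_const _)).mul
        continuous_const).intervalIntegrable _ _
  have hpow : ((1:ℝ) / 2) ^ (s + 1) = ((2:ℝ) ^ (s + 1))⁻¹ := by
    rw [one_div, Real.inv_rpow (by norm_num : (0:ℝ) ≤ 2)]
  have hP : (0:ℝ) < (2:ℝ) ^ (s + 1) := Real.rpow_pos_of_pos (by norm_num) _
  have hfin : (∫ t in c..b, ((b - t) / (b - a)) ^ s) * A
        + (∫ t in c..b, ((t - a) / (b - a)) ^ s) * B
      = (b - a) / ((2:ℝ) ^ (s + 1) * (s + 1)) * (A + ((2:ℝ) ^ (s + 1) - 1) * B) := by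
    rw [hI1, hI2, hpow]
    field_simp
  calc (∫ t in c..b, |f' t| ^ q) ≤ _ := hmono
    _ = _ := by rw [hsplit, hfin]
end
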